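/- arXiv:2502.00650 — 4 statements merged into one kernel-verified Lean document; each statement's English description precedes it below -/
import Mathlib

section
/- Let X be a topological space covered by finitely many open sets B₁, …, Bₙ such that X = ⋃ Bᵢ, each Bᵢ is simply connected, each nonempty pairwise intersection Bᵢ ∩ Bⱼ is path-connected, and X is path-connected. Then the fundamental group of X is finitely generated. -/
/-!
Subdivide a loop `γ` at `a` so that each piece lies in a single `B i`. Every junction point lies
in some `B i ∩ B j`; as that intersection is path-connected, a path inside it joins the junction
point to a point of a fixed finite set `P`. Inserting these paths and their inverses, together
with fixed paths `c p` from `a` to the points `p ∈ P`, writes `γ` as a product of loops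
`c p ⬝ ρ ⬝ (c q)⁻¹` with `ρ` a path from `p ∈ P` to `q ∈ P` inside one `B i`. Since `B i` is
simply connected, such a loop depends only on `(i, p, q)`, so finitely many loops generate.
-/

open Set unitInterval

section

variable {X : Type*} [TopologicalSpace X]

theorem exists_finite_forall_joinedIn {κ : Type*} [Finite κ] {U : κ → Set X}
    (hU : ∀ k, (U k).Nonempty → IsPathConnected (U k)) (a : X) :
    ∃ P : Set X, P.Finite ∧ a ∈ P ∧ ∀ k, ∀ z ∈ U k, ∃ p ∈ P, JoinedIn (U k) p z := by
  have : Nonempty X := ⟨a⟩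
  refine ⟨insert a (range fun k ↦ Classical.epsilon (· ∈ U k)), (finite_range _).insert a,
    mem_insert a _, fun k z hz ↦ ⟨_, mem_insert_of_mem _ ⟨k, rfl⟩, ?_⟩⟩
  exact (hU k ⟨z, hz⟩).joinedIn _ (Classical.epsilon_spec ⟨z, hz⟩) _ hz

namespace Path

theorem Homotopic.of_range_subset {U : Set X} [hU : SimplyConnectedSpace U] {x y : X}
    {p q : Path x y} (hp : range p ⊆ U) (hq : range q ⊆ U) : p.Homotopic q := by
  obtain ⟨-, hnull⟩ := isSimplyConnected_iff_exists_homotopy_refl_forall_mem.1 hU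
  obtain ⟨F, -⟩ := hnull x (p.trans q.symm) fun t ↦ by
    have : (p.trans q.symm) t ∈ range p ∪ range q := by
      rw [← symm_range q, ← trans_range]
      exact mem_range_self t
    exact this.elim (hp ·) (hq ·)
  have hloop : (Quotient.mk p).trans (Quotient.mk q).symm = Quotient.refl x := by
    rw [← Quotient.mk_symm, ← Quotient.mk_trans, ← Quotient.mk_refl]
    exact Quotient.sound ⟨F⟩
  rw [← Quotient.eq]
  calc Quotient.mk p = ((Quotient.mk p).trans (Quotient.mk q).symm).trans (Quotient.mk q) := by
        simp
    _ = Quotient.mk q := by rw [hloop, Quotient.refl_trans]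

theorem exists_subpath_subset_of_iUnion_eq_univ {ι : Type*} {U : ι → Set X} {x y : X}
    (γ : Path x y) (hU : ∀ i, IsOpen (U i)) (hcover : ⋃ i, U i = univ) :
    ∃ (t : ℕ → I) (idx : ℕ → ι) (N : ℕ),
      t 0 = 0 ∧ t N = 1 ∧ ∀ k, range (γ.subpath (t k) (t (k + 1))) ⊆ U (idx k) := by
  obtain ⟨t, ht0, hmono, ⟨N, htN⟩, hsub⟩ := exists_monotone_Icc_subset_open_cover_unitInterval
    (fun i ↦ (hU i).preimage γ.continuous) (by simp [← preimage_iUnion, hcover])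
  choose idx hidx using hsub
  refine ⟨t, idx, N, ht0, htN N le_rfl, fun k ↦ ?_⟩
  rw [γ.range_subpath_of_le _ _ (hmono k.le_succ), image_subset_iff]
  exact hidx k

variable {a : X} (c : ∀ x, Path a x)

noncomputable def anchoredLoop {x y : X} (γ : Path x y) : FundamentalGroup X a :=
  (Homotopic.Quotient.mk (c x)).trans
    ((Homotopic.Quotient.mk γ).trans (Homotopic.Quotient.mk (c y)).symm)

variable {c}

theorem anchoredLoop_congr {x y : X} {γ γ' : Path x y} (h : γ.Homotopic γ') :
    γ.anchoredLoop c = γ'.anchoredLoop c := by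
  rw [anchoredLoop, anchoredLoop, Homotopic.Quotient.eq.2 h]

theorem anchoredLoop_trans {x y z : X} (γ : Path x y) (δ : Path y z) :
    (γ.trans δ).anchoredLoop c = δ.anchoredLoop c * γ.anchoredLoop c := by
  rw [anchoredLoop, anchoredLoop, anchoredLoop, FundamentalGroup.mul_def,
    Homotopic.Quotient.mk_trans]
  grind

theorem anchoredLoop_refl (x : X) : (Path.refl x).anchoredLoop c = 1 := by
  rw [anchoredLoop, Homotopic.Quotient.mk_refl, FundamentalGroup.one_def]
  grind

theorem anchoredLoop_symm {x y : X} (γ : Path x y) :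
    γ.symm.anchoredLoop c = (γ.anchoredLoop c)⁻¹ := by
  refine eq_inv_of_mul_eq_one_left ?_
  rw [← anchoredLoop_trans, anchoredLoop_congr (Homotopic.trans_symm γ), anchoredLoop_refl]

theorem anchoredLoop_cast {x y x' y' : X} (γ : Path x y) (hx : x' = x) (hy : y' = y) :
    (γ.cast hx hy).anchoredLoop c = γ.anchoredLoop c := by
  subst hx hy
  rfl

theorem anchoredLoop_subpath_trans_subpath {x y : X} (γ : Path x y) (s u v : I) :
    (γ.subpath s v).anchoredLoop c =
      (γ.subpath u v).anchoredLoop c * (γ.subpath s u).anchoredLoop c := by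
  rw [← anchoredLoop_trans, anchoredLoop_congr ⟨Homotopy.subpathTransSubpath γ s u v⟩]

theorem anchoredLoop_eq_mk (hc : c a = Path.refl a) (γ : Path a a) :
    γ.anchoredLoop c = Homotopic.Quotient.mk γ := by
  rw [anchoredLoop, hc, ← Homotopic.Quotient.mk_symm, refl_symm, Homotopic.Quotient.mk_refl]
  grind

end Path

open Path

variable {ι : Type*} {a : X} (c : ∀ x, Path a x)

def localAnchoredLoops (B : ι → Set X) (P : Set X) : Set (FundamentalGroup X a) :=
  {g | ∃ i, ∃ p ∈ P, ∃ q ∈ P, ∃ ρ : Path p q, range ρ ⊆ B i ∧ ρ.anchoredLoop c = g}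

variable {c} {B : ι → Set X} {P : Set X}

theorem anchoredLoop_mem_localAnchoredLoops {i : ι} {p q : X} (hp : p ∈ P) (hq : q ∈ P)
    {ρ : Path p q} (hρ : range ρ ⊆ B i) : ρ.anchoredLoop c ∈ localAnchoredLoops c B P :=
  ⟨i, p, hp, q, hq, ρ, hρ, rfl⟩

theorem localAnchoredLoops_finite [Finite ι] (hB : ∀ i, SimplyConnectedSpace (B i))
    (hP : P.Finite) : (localAnchoredLoops c B P).Finite := by
  have hsingle : ∀ i (p q : X),
      {g | ∃ ρ : Path p q, range ρ ⊆ B i ∧ ρ.anchoredLoop c = g}.Subsingleton := by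
    rintro i p q _ ⟨ρ, hρ, rfl⟩ _ ⟨ρ', hρ', rfl⟩
    have := hB i
    exact anchoredLoop_congr (.of_range_subset hρ hρ')
  refine (finite_iUnion fun i ↦ hP.biUnion fun p _ ↦ hP.biUnion fun q _ ↦
    (hsingle i p q).finite).subset ?_
  rintro _ ⟨i, p, hp, q, hq, ρ, hρ, rfl⟩
  simp only [mem_iUnion]
  exact ⟨i, p, hp, q, hq, ρ, hρ, rfl⟩

theorem exists_anchoredLoop_subpath_trans_mem_closure
    (hP : ∀ i j, ∀ z ∈ B i ∩ B j, ∃ p ∈ P, JoinedIn (B i ∩ B j) p z) {x y : X} (hx : x ∈ P)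
    (γ : Path x y) {t : ℕ → I} {idx : ℕ → ι} (ht0 : t 0 = 0)
    (hsub : ∀ k, range (γ.subpath (t k) (t (k + 1))) ⊆ B (idx k)) (k : ℕ) :
    ∃ p ∈ P, ∃ τ : Path (γ (t k)) p, range τ ⊆ B (idx k) ∧
      ((γ.subpath 0 (t k)).trans τ).anchoredLoop c ∈
        Subgroup.closure (localAnchoredLoops c B P) := by
  induction k with
  | zero =>
    refine ⟨γ (t 0), by rwa [ht0, γ.source], .refl _, ?_, ?_⟩
    · rw [refl_range, singleton_subset_iff]
      exact hsub 0 ⟨0, Path.source _⟩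
    · rw [anchoredLoop_trans, anchoredLoop_refl, one_mul, ht0, subpath_self, anchoredLoop_refl]
      exact one_mem _
  | succ k ih =>
    obtain ⟨p, hp, τ, hτ, hmem⟩ := ih
    obtain ⟨p', hp', hJ⟩ := hP (idx k) (idx (k + 1)) _
      ⟨hsub k ⟨1, Path.target _⟩, hsub (k + 1) ⟨0, Path.source _⟩⟩
    have hJ_range : range hJ.somePath ⊆ B (idx k) ∩ B (idx (k + 1)) :=
      range_subset_iff.2 hJ.somePath_mem
    refine ⟨p', hp', hJ.somePath.symm, ?_, ?_⟩
    · rw [symm_range]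
      exact hJ_range.trans inter_subset_right
    have hsplit : ((γ.subpath 0 (t (k + 1))).trans hJ.somePath.symm).anchoredLoop c =
        (τ.symm.trans ((γ.subpath (t k) (t (k + 1))).trans hJ.somePath.symm)).anchoredLoop c *
          ((γ.subpath 0 (t k)).trans τ).anchoredLoop c := by
      simp only [anchoredLoop_trans, anchoredLoop_symm]
      rw [anchoredLoop_subpath_trans_subpath γ 0 (t k)]
      group
    have hlocal : range (τ.symm.trans ((γ.subpath (t k) (t (k + 1))).trans hJ.somePath.symm)) ⊆
        B (idx k) := by
      rw [trans_range, trans_range, symm_range, symm_range]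
      exact union_subset hτ (union_subset (hsub k) (hJ_range.trans inter_subset_left))
    rw [hsplit]
    exact mul_mem (Subgroup.subset_closure (anchoredLoop_mem_localAnchoredLoops hp hp' hlocal))
      hmem

theorem anchoredLoop_mem_closure_localAnchoredLoops (hopen : ∀ i, IsOpen (B i))
    (hcover : ⋃ i, B i = univ) (hP : ∀ i j, ∀ z ∈ B i ∩ B j, ∃ p ∈ P, JoinedIn (B i ∩ B j) p z)
    {x y : X} (hx : x ∈ P) (hy : y ∈ P) (γ : Path x y) :
    γ.anchoredLoop c ∈ Subgroup.closure (localAnchoredLoops c B P) := by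
  obtain ⟨t, idx, N, ht0, htN, hsub⟩ := γ.exists_subpath_subset_of_iUnion_eq_univ hopen hcover
  obtain ⟨p, hp, τ, hτ, hmem⟩ := exists_anchoredLoop_subpath_trans_mem_closure hP hx γ ht0 hsub N
  have hτ_local : τ.symm.anchoredLoop c ∈ localAnchoredLoops c B P :=
    anchoredLoop_mem_localAnchoredLoops hp (by rwa [htN, γ.target]) (by rwa [symm_range])
  have hend := mul_mem (Subgroup.subset_closure hτ_local) hmem
  rw [anchoredLoop_trans, anchoredLoop_symm, inv_mul_cancel_left, htN, subpath_zero_one,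
    anchoredLoop_cast] at hend
  exact hend

end

/-- If a path-connected space `X` is covered by finitely many open,
simply connected sets whose pairwise nonempty intersections are
path-connected, then the fundamental group of `X` is finitely generated. -/
theorem fundamentalGroup_fg_of_finite_good_cover {X : Type*} [TopologicalSpace X]
    [PathConnectedSpace X] (n : ℕ) (B : Fin n → Set X)
    (hopen : ∀ i, IsOpen (B i))
    (hcover : ⋃ i, B i = Set.univ)
    (hsc : ∀ i, SimplyConnectedSpace (B i))
    (hij : ∀ i j, (B i ∩ B j).Nonempty → IsPathConnected (B i ∩ B j))
    (a : X) :
    Group.FG (FundamentalGroup X a) := by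
  classical
  obtain ⟨P, hP_fin, haP, hP⟩ := exists_finite_forall_joinedIn
    (U := fun ij : Fin n × Fin n ↦ B ij.1 ∩ B ij.2) (fun ij ↦ hij ij.1 ij.2) a
  obtain ⟨c, hc⟩ : ∃ c : ∀ x, Path a x, c a = Path.refl a :=
    ⟨fun x ↦ if h : x = a then (Path.refl a).cast rfl h else PathConnectedSpace.somePath a x,
      by simp⟩
  refine Group.fg_iff.2 ⟨localAnchoredLoops c B P, (Subgroup.eq_top_iff' _).2 fun g ↦ ?_,
    localAnchoredLoops_finite hsc hP_fin⟩
  induction g using Path.Homotopic.Quotient.ind with | mk γ => ?_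
  rw [← Path.anchoredLoop_eq_mk hc]
  exact anchoredLoop_mem_closure_localAnchoredLoops hopen hcover (fun i j ↦ hP (i, j)) haP haP γ
end

section
/- Let D ⊆ ℂ be a bounded domain and a ∈ D. If f : D → D is holomorphic with f(a) = a, then |f'(a)| ≤ 1. -/
/-!
Every iterate `f^[n]` is again a holomorphic self-map of `D` fixing `a`, with derivative
`f'(a)ⁿ` at `a`. If `B(a, r) ⊆ D`, the Cauchy estimate on that disc bounds `|(f^[n])'(a)|` by
`diam D / r` uniformly in `n`, so `|f'(a)|ⁿ` stays bounded and `|f'(a)| ≤ 1`.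
-/

open Metric Set Bornology

theorem le_one_of_forall_pow_le {R : Type*} [Semiring R] [LinearOrder R] [IsStrictOrderedRing R]
    [Archimedean R] [ExistsAddOfLE R] {x C : R} (h : ∀ n : ℕ, x ^ n ≤ C) : x ≤ 1 := by
  by_contra! hx
  obtain ⟨n, hn⟩ := pow_unbounded_of_one_lt C hx
  exact (h n).not_gt hn

theorem Complex.norm_deriv_le_diam_div_of_mapsTo_ball {E : Type*} [NormedAddCommGroup E]
    [NormedSpace ℂ E] {f : ℂ → E} {s : Set E} {c : ℂ} {r : ℝ} (hs : IsBounded s)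
    (hd : DifferentiableOn ℂ f (ball c r)) (h_maps : MapsTo f (ball c r) s) (hr : 0 < r) :
    ‖deriv f c‖ ≤ diam s / r := by
  have hfc : f c ∈ s := h_maps (mem_ball_self hr)
  refine norm_deriv_le_div_of_mapsTo_ball hd (fun z hz ↦ ?_) hr
  rw [mem_closedBall, dist_comm]
  exact dist_le_diam_of_mem hs hfc (h_maps hz)

theorem abs_deriv_le_one_general (D : Set ℂ) (hO : IsOpen D)
    (hB : Bornology.IsBounded D) (f : ℂ → ℂ) (hf : DifferentiableOn ℂ f D)
    (hmap : Set.MapsTo f D D) (a : ℂ) (ha : a ∈ D) (hfa : f a = a) :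
    ‖deriv f a‖ ≤ 1 := by
  obtain ⟨r, hr, hball⟩ := isOpen_iff.1 hO a ha
  have hderiv : HasDerivAt f (deriv f a) a :=
    (hf.differentiableAt (hO.mem_nhds ha)).hasDerivAt
  refine le_one_of_forall_pow_le (C := diam D / r) fun n ↦ ?_
  rw [← norm_pow, ← (hderiv.iterate a hfa n).deriv]
  exact Complex.norm_deriv_le_diam_div_of_mapsTo_ball hB ((hf.iterate hmap n).mono hball)
    ((hmap.iterate n).mono_left hball) hr

/-- Cartan–Carathéodory: a holomorphic self-map of a bounded planar domain
with a fixed point `a` satisfies `|f'(a)| ≤ 1`. -/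
theorem abs_deriv_le_one (D : Set ℂ) (hO : IsOpen D) (hC : IsConnected D)
    (hB : Bornology.IsBounded D) (f : ℂ → ℂ) (hf : DifferentiableOn ℂ f D)
    (hmap : Set.MapsTo f D D) (a : ℂ) (ha : a ∈ D) (hfa : f a = a) :
    ‖deriv f a‖ ≤ 1 :=
  abs_deriv_le_one_general D hO hB f hf hmap a ha hfa
end

section
/- Let D ⊆ ℂ be a bounded domain and a ∈ D. If f : D → D is holomorphic with f(a) = a and f'(a) = 1, then f is the identity map on D. -/
/-!
Near `a` write `f z - z = (z - a) ^ k * g z` with `g a ≠ 0`; since `f a = a` and `f' a = 1`,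
`k ≥ 2`. For maps tangent to the identity to order `k ≥ 2` the coefficients `g a` add under
composition, so `f^[n] z - z = (z - a) ^ k * gₙ z` with `gₙ a = n * g a`. Every iterate maps `D`
into `D`, so Cauchy's estimate on a disc of radius `r` about `a` inside `D` gives
`n * ‖g a‖ ≤ diam D / r ^ k` for all `n`, which is absurd. Hence `f = id` near `a`, and on all of
`D` by the identity theorem.
-/

open Filter Topology Metric Nat

section
variable {𝕜 : Type*} [NontriviallyNormedField 𝕜]

theorem iteratedDeriv_eq_factorial_mul_of_eventuallyEq_pow_mul {H G : 𝕜 → 𝕜} {a : 𝕜} {k : ℕ}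
    (hG : ContDiffAt 𝕜 k G a) (hHG : H =ᶠ[𝓝 a] fun z ↦ (z - a) ^ k * G z) :
    iteratedDeriv k H a = k ! * G a := by
  have hpow (i : ℕ) :
      iteratedDeriv i (fun z ↦ (z - a) ^ k) a = k.descFactorial i * 0 ^ (k - i) := by
    simp [iteratedDeriv_comp_sub_const (f := fun z : 𝕜 ↦ z ^ k)]
  rw [hHG.iteratedDeriv_eq, iteratedDeriv_fun_mul (by fun_prop) hG, Finset.sum_range_succ,
    Finset.sum_eq_zero fun i hi ↦ ?_]
  · simp [hpow, Nat.descFactorial_self]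
  · have : k - i ≠ 0 := by grind
    simp [hpow, this]

theorem exists_comp_sub_self_eq_pow_mul {f h g₁ g₂ : 𝕜 → 𝕜} {a : 𝕜} {k : ℕ} (hk : 2 ≤ k)
    (hh : AnalyticAt 𝕜 h a) (hha : h a = a) (hg₁ : AnalyticAt 𝕜 g₁ a) (hg₂ : AnalyticAt 𝕜 g₂ a)
    (hfg₁ : ∀ᶠ z in 𝓝 a, f z - z = (z - a) ^ k * g₁ z)
    (hhg₂ : ∀ᶠ z in 𝓝 a, h z - z = (z - a) ^ k * g₂ z) :
    ∃ g, AnalyticAt 𝕜 g a ∧ g a = g₁ a + g₂ a ∧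
      ∀ᶠ z in 𝓝 a, f (h z) - z = (z - a) ^ k * g z := by
  obtain ⟨m, rfl⟩ : ∃ m, k = m + 2 := ⟨k - 2, by omega⟩
  have hg₁h : AnalyticAt 𝕜 (fun z ↦ g₁ (h z)) a := hg₁.fun_comp_of_eq hh hha
  refine ⟨fun z ↦ (1 + (z - a) ^ (m + 1) * g₂ z) ^ (m + 2) * g₁ (h z) + g₂ z,
    (((analyticAt_const.add (((analyticAt_id.sub analyticAt_const).pow _).mul hg₂)).pow _).mul
      hg₁h).add hg₂, by simp [hha], ?_⟩
  have hfg₁h : ∀ᶠ z in 𝓝 a, f (h z) - h z = (h z - a) ^ (m + 2) * g₁ (h z) :=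
    (hha ▸ hh.continuousAt.tendsto).eventually hfg₁
  filter_upwards [hfg₁h, hhg₂] with z h₁ h₂
  have hw : h z - a = (z - a) * (1 + (z - a) ^ (m + 1) * g₂ z) := by linear_combination h₂
  rw [hw, mul_pow] at h₁
  linear_combination h₁ + h₂

theorem AnalyticAt.iterate_of_apply_eq {E : Type*} [NormedAddCommGroup E] [NormedSpace 𝕜 E]
    {f : E → E} {a : E} (hf : AnalyticAt 𝕜 f a) (hfa : f a = a) (n : ℕ) :
    AnalyticAt 𝕜 f^[n] a := by
  induction n with
  | zero => exact analyticAt_id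
  | succ n ih =>
    rw [Function.iterate_succ']
    exact hf.comp_of_eq ih (Function.iterate_fixed hfa n)

theorem exists_iterate_sub_self_eq_pow_mul {f g : 𝕜 → 𝕜} {a : 𝕜} {k : ℕ} (hk : 2 ≤ k)
    (hf : AnalyticAt 𝕜 f a) (hfa : f a = a) (hg : AnalyticAt 𝕜 g a)
    (hfg : ∀ᶠ z in 𝓝 a, f z - z = (z - a) ^ k * g z) (n : ℕ) :
    ∃ gₙ, AnalyticAt 𝕜 gₙ a ∧ gₙ a = n * g a ∧
      ∀ᶠ z in 𝓝 a, f^[n] z - z = (z - a) ^ k * gₙ z := by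
  induction n with
  | zero => exact ⟨0, analyticAt_const, by simp, by simp⟩
  | succ n ih =>
    obtain ⟨gₙ, hgₙ, hgₙa, hfgₙ⟩ := ih
    obtain ⟨g', hg', hg'a, hfg'⟩ := exists_comp_sub_self_eq_pow_mul hk
      (hf.iterate_of_apply_eq hfa n) (Function.iterate_fixed hfa n) hg hgₙ hfg hfgₙ
    refine ⟨g', hg', by rw [hg'a, hgₙa]; push_cast; ring, ?_⟩
    simpa only [← Function.iterate_succ_apply' f n] using hfg'

theorem exists_sub_self_eq_pow_mul_of_deriv_eq_one [CharZero 𝕜] [CompleteSpace 𝕜] {f : 𝕜 → 𝕜}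
    {a : 𝕜} (hf : AnalyticAt 𝕜 f a) (hfa : f a = a) (hderiv : deriv f a = 1)
    (hne : ¬ f =ᶠ[𝓝 a] id) :
    ∃ k, 2 ≤ k ∧ ∃ g, AnalyticAt 𝕜 g a ∧ g a ≠ 0 ∧ ∀ᶠ z in 𝓝 a, f z - z = (z - a) ^ k * g z := by
  have hF : AnalyticAt 𝕜 (fun z ↦ f z - z) a := hf.sub analyticAt_id
  obtain ⟨k, hk⟩ : ∃ k : ℕ, analyticOrderAt (fun z ↦ f z - z) a = k := by
    refine (ENat.ne_top_iff_exists.mp fun htop ↦ hne ?_).imp fun _ ↦ Eq.symm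
    filter_upwards [analyticOrderAt_eq_top.mp htop] with z hz
    exact sub_eq_zero.mp hz
  have h2 : ((2 : ℕ) : ℕ∞) ≤ analyticOrderAt (fun z ↦ f z - z) a := by
    rw [natCast_le_analyticOrderAt_iff_iteratedDeriv_eq_zero hF]
    intro i hi
    interval_cases i
    · simp [hfa]
    · simp [deriv_fun_sub hf.differentiableAt differentiableAt_fun_id, hderiv]
  obtain ⟨g, hg, hga, hfg⟩ := hF.analyticOrderAt_eq_natCast.mp hk
  exact ⟨k, by exact_mod_cast hk ▸ h2, g, hg, hga, by simpa only [smul_eq_mul] using hfg⟩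

end

theorem norm_le_div_pow_of_eventuallyEq_pow_mul {H G : ℂ → ℂ} {a : ℂ} {k : ℕ} {r M : ℝ}
    (hr : 0 < r) (hH : DifferentiableOn ℂ H (closedBall a r)) (hM : ∀ z ∈ sphere a r, ‖H z‖ ≤ M)
    (hG : ContDiffAt ℂ k G a) (hHG : H =ᶠ[𝓝 a] fun z ↦ (z - a) ^ k * G z) :
    ‖G a‖ ≤ M / r ^ k := by
  have hcauchy := Complex.norm_iteratedDeriv_le_of_forall_mem_sphere_norm_le k hr
    (hH.diffContOnCl_ball subset_rfl) hM
  rw [iteratedDeriv_eq_factorial_mul_of_eventuallyEq_pow_mul hG hHG, norm_mul, Complex.norm_natCast,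
    mul_div_assoc] at hcauchy
  exact le_of_mul_le_mul_left hcauchy (by positivity)

/-- Cartan's uniqueness theorem: a holomorphic self-map of a bounded planar
domain with `f a = a` and `f'(a) = 1` is the identity on the domain. -/
theorem eq_id_of_deriv_eq_one (D : Set ℂ) (hO : IsOpen D) (hC : IsConnected D)
    (hB : Bornology.IsBounded D) (f : ℂ → ℂ) (hf : DifferentiableOn ℂ f D)
    (hmap : Set.MapsTo f D D) (a : ℂ) (ha : a ∈ D) (hfa : f a = a)
    (hderiv : deriv f a = 1) : Set.EqOn f id D := by
  have hfD : AnalyticOnNhd ℂ f D := hf.analyticOnNhd hO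
  refine hfD.eqOn_of_preconnected_of_eventuallyEq analyticOnNhd_id hC.isPreconnected ha ?_
  by_contra hne
  obtain ⟨k, hk, g, hg, hga, hfg⟩ :=
    exists_sub_self_eq_pow_mul_of_deriv_eq_one (hfD a ha) hfa hderiv hne
  obtain ⟨r, hr, hrD⟩ := nhds_basis_closedBall.mem_iff.mp (hO.mem_nhds ha)
  have hbound (n : ℕ) : n * ‖g a‖ ≤ diam D / r ^ k := by
    obtain ⟨gₙ, hgₙ, hgₙa, hfgₙ⟩ := exists_iterate_sub_self_eq_pow_mul hk (hfD a ha) hfa hg hfg n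
    have hsphere (z) (hz : z ∈ sphere a r) : ‖f^[n] z - z‖ ≤ diam D := by
      have hzD := hrD (sphere_subset_closedBall hz)
      exact dist_eq_norm (f^[n] z) z ▸ dist_le_diam_of_mem hB (hmap.iterate n hzD) hzD
    simpa [hgₙa] using norm_le_div_pow_of_eventuallyEq_pow_mul hr
      (((hf.iterate hmap n).sub differentiableOn_id).mono hrD) hsphere hgₙ.contDiffAt hfgₙ
  obtain ⟨n, hn⟩ := exists_nat_gt (diam D / r ^ k / ‖g a‖)
  rw [div_lt_iff₀ (norm_pos_iff.mpr hga)] at hn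
  exact (hbound n).not_gt hn
end

section
/- Let D ⊆ ℂ be a bounded domain and a ∈ D. The map sending an automorphism f of D fixing a to its derivative f'(a) ∈ ℂ is an injective group homomorphism from the isotropy group Iso_a(D) into the circle group {z ∈ ℂ : |z| = 1}. -/
/-!
A holomorphic self-map `f` of a bounded domain fixing `a` has iterates with derivative
`f'(a) ^ j` at `a`, and the Cauchy estimate bounds these uniformly in `j`, so `‖f'(a)‖ ≤ 1`;
applied to an automorphism and its inverse this gives `‖f'(a)‖ = 1`.

Injectivity is Cartan's uniqueness theorem applied to `g⁻¹ ∘ f`. If `h(a) = a`, `h'(a) = 1` and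
`h ≠ id`, then `h z - z = c (z - a) ^ n + …` with `c ≠ 0`, `n ≥ 2`, and by induction
`h^[j] z - z = j c (z - a) ^ n + …`. The maximum principle on a small circle bounds `j ‖c‖`
by `diam D / r ^ n` for every `j`, which is absurd.
-/

/-- `f` is a (conformal) automorphism of the planar domain `D`. -/
def IsAut (D : Set ℂ) (f : ℂ → ℂ) : Prop :=
  DifferentiableOn ℂ f D ∧ Set.MapsTo f D D ∧ Set.BijOn f D D ∧
    ∃ g : ℂ → ℂ, DifferentiableOn ℂ g D ∧ Set.MapsTo g D D ∧
      (∀ z ∈ D, g (f z) = z) ∧ (∀ z ∈ D, f (g z) = z)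

open Metric Set Filter Function Topology

theorem tendsto_iterate_sub_div_pow {𝕜 : Type*} [NormedField 𝕜] {h : 𝕜 → 𝕜} {a c : 𝕜}
    {n : ℕ} (hn : 2 ≤ n) (hcont : ContinuousAt h a) (hfix : h a = a)
    (hc : Tendsto (fun z => (h z - z) / (z - a) ^ n) (𝓝[≠] a) (𝓝 c)) (j : ℕ) :
    Tendsto (fun z => (h^[j] z - z) / (z - a) ^ n) (𝓝[≠] a) (𝓝 (j * c)) := by
  classical
  -- Filling in the limit at `a` makes `h w - w = q w * (w - a) ^ n` hold for every `w`, also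
  -- where `h^[j] z = a`.
  set q := update (fun z => (h z - z) / (z - a) ^ n) a c
  have hq : Tendsto q (𝓝 a) (𝓝 c) := by
    simpa [q] using (continuousAt_update_same.mpr hc).tendsto
  have hhq (w : 𝕜) : h w - w = q w * (w - a) ^ n := by
    rcases eq_or_ne w a with rfl | hw
    · simp [hfix, zero_pow (by omega : n ≠ 0)]
    · simp only [q, update_of_ne hw]
      rw [div_mul_cancel₀ _ (pow_ne_zero _ (sub_ne_zero.mpr hw))]
  induction j with
  | zero => simpa using tendsto_const_nhds
  | succ j ih =>
    have hiter : Tendsto h^[j] (𝓝[≠] a) (𝓝 a) := by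
      simpa [iterate_fixed hfix j] using
        (hcont.iterate hfix j).tendsto.mono_left nhdsWithin_le_nhds
    have hpow : Tendsto (fun z : 𝕜 => (z - a) ^ (n - 1)) (𝓝[≠] a) (𝓝 0) := by
      have hpow_cont : Continuous fun z : 𝕜 => (z - a) ^ (n - 1) := by fun_prop
      simpa [zero_pow (by omega : n - 1 ≠ 0)] using
        (hpow_cont.tendsto a).mono_left nhdsWithin_le_nhds
    have hratio : Tendsto (fun z => (h^[j] z - a) / (z - a)) (𝓝[≠] a) (𝓝 1) := by
      have := (hpow.mul ih).const_add 1
      rw [zero_mul, add_zero] at this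
      refine this.congr' ?_
      filter_upwards [self_mem_nhdsWithin] with z hz
      have hza : z - a ≠ 0 := sub_ne_zero.mpr hz
      rw [← pow_sub_one_mul (by omega : n ≠ 0)]
      field_simp
      ring
    have hstep := ((hq.comp hiter).mul (hratio.pow n)).add ih
    rw [one_pow, mul_one] at hstep
    convert hstep.congr' ?_ using 2
    · push_cast
      ring
    filter_upwards [self_mem_nhdsWithin] with z hz
    have hza : (z - a) ^ n ≠ 0 := pow_ne_zero _ (sub_ne_zero.mpr hz)
    simp only [comp_apply, iterate_succ_apply']
    rw [show h (h^[j] z) - z = (h (h^[j] z) - h^[j] z) + (h^[j] z - z) by ring, hhq, add_div,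
      div_pow, mul_div_assoc]

theorem norm_le_of_tendsto_div_pow {F : ℂ → ℂ} {a c : ℂ} {n : ℕ} {r M : ℝ} (hr : 0 < r)
    (hF : DifferentiableOn ℂ F (closedBall a r)) (hM : ∀ z ∈ sphere a r, ‖F z‖ ≤ M)
    (hc : Tendsto (fun z => F z / (z - a) ^ n) (𝓝[≠] a) (𝓝 c)) :
    ‖c‖ ≤ M / r ^ n := by
  classical
  set G := update (fun z => F z / (z - a) ^ n) a c
  have hG : DifferentiableOn ℂ G (closedBall a r) := by
    refine (Complex.differentiableOn_compl_singleton_and_continuousAt_iff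
      (closedBall_mem_nhds a hr)).mp ⟨?_, continuousAt_update_same.mpr hc⟩
    have hquot : DifferentiableOn ℂ (fun z => F z / (z - a) ^ n) (closedBall a r \ {a}) :=
      (hF.mono sdiff_subset).div (by fun_prop) fun z hz => pow_ne_zero _ (sub_ne_zero.mpr hz.2)
    exact hquot.congr fun z hz => update_of_ne hz.2 ..
  have hfrontier : ∀ z ∈ frontier (ball a r), ‖G z‖ ≤ M / r ^ n := by
    rw [frontier_ball a hr.ne']
    intro z hz
    have hza : z ≠ a := ne_of_mem_sphere hz hr.ne'
    simp only [G, update_of_ne hza]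
    rw [norm_div, norm_pow, ← dist_eq_norm, mem_sphere.mp hz]
    exact div_le_div_of_nonneg_right (hM z hz) (by positivity)
  simpa [G] using Complex.norm_le_of_forall_mem_frontier_norm_le isBounded_ball
    (by rw [← closure_ball a hr.ne'] at hG; exact hG.diffContOnCl) hfrontier
    (subset_closure (mem_ball_self hr))

theorem norm_deriv_le_one_of_mapsTo {D : Set ℂ} (hO : IsOpen D) (hB : Bornology.IsBounded D)
    {a : ℂ} (ha : a ∈ D) {f : ℂ → ℂ} (hd : DifferentiableOn ℂ f D) (hm : MapsTo f D D)
    (hfix : f a = a) : ‖deriv f a‖ ≤ 1 := by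
  obtain ⟨r, hr, hrD⟩ := Metric.isOpen_iff.mp hO a ha
  obtain ⟨R, hDR⟩ := hB.subset_closedBall a
  have hderiv : HasDerivAt f (deriv f a) a := (hd.differentiableAt (hO.mem_nhds ha)).hasDerivAt
  have hbound (j : ℕ) : ‖deriv f a‖ ^ j ≤ R / r := by
    rw [← norm_pow, ← (HasDerivAt.iterate (hf := hderiv) (hx := hfix) (n := j)).deriv]
    refine Complex.norm_deriv_le_div_of_mapsTo_ball ((hd.iterate hm j).mono hrD) ?_ hr
    rw [iterate_fixed hfix j]
    exact fun z hz => hDR (hm.iterate j (hrD hz))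
  by_contra! hgt
  obtain ⟨j, hj⟩ := pow_unbounded_of_one_lt (R / r) hgt
  exact (hbound j).not_gt hj

theorem AnalyticAt.two_le_analyticOrderAt_sub_id {𝕜 : Type*} [NontriviallyNormedField 𝕜]
    [CharZero 𝕜] [CompleteSpace 𝕜] {h : 𝕜 → 𝕜} {a : 𝕜} (hh : AnalyticAt 𝕜 h a)
    (hfix : h a = a) (hder : deriv h a = 1) : 2 ≤ analyticOrderAt (fun z => h z - z) a := by
  have hF : AnalyticAt 𝕜 (fun z => h z - z) a := hh.sub analyticAt_id
  refine (natCast_le_analyticOrderAt_iff_iteratedDeriv_eq_zero hF).mpr fun i hi => ?_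
  interval_cases i
  · simp [hfix]
  · rw [iteratedDeriv_one, deriv_fun_sub hh.differentiableAt differentiableAt_fun_id, hder,
      deriv_id'', sub_self]

theorem eqOn_id_of_deriv_eq_one {D : Set ℂ} (hO : IsOpen D) (hC : IsPreconnected D)
    (hB : Bornology.IsBounded D) {a : ℂ} (ha : a ∈ D) {h : ℂ → ℂ}
    (hd : DifferentiableOn ℂ h D) (hm : MapsTo h D D) (hfix : h a = a)
    (hder : deriv h a = 1) : EqOn h id D := by
  have hha : AnalyticAt ℂ h a := hd.analyticAt (hO.mem_nhds ha)
  have hF : AnalyticAt ℂ (fun z => h z - z) a := hha.sub analyticAt_id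
  suffices analyticOrderAt (fun z => h z - z) a = ⊤ by
    refine (hd.analyticOnNhd hO).eqOn_of_preconnected_of_eventuallyEq analyticOnNhd_id hC ha ?_
    exact (analyticOrderAt_eq_top.mp this).mono fun z hz => sub_eq_zero.mp hz
  by_contra htop
  obtain ⟨n, hn⟩ := ENat.ne_top_iff_exists.mp htop
  have h2n : 2 ≤ n := by exact_mod_cast hn ▸ hha.two_le_analyticOrderAt_sub_id hfix hder
  obtain ⟨g, hg, hga, hFg⟩ := hF.analyticOrderAt_eq_natCast.mp hn.symm
  have hlim : Tendsto (fun z => (h z - z) / (z - a) ^ n) (𝓝[≠] a) (𝓝 (g a)) := by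
    refine (hg.continuousAt.tendsto.mono_left nhdsWithin_le_nhds).congr' ?_
    filter_upwards [nhdsWithin_le_nhds hFg, self_mem_nhdsWithin] with z hz hza
    rw [hz, smul_eq_mul, mul_div_cancel_left₀ _ (pow_ne_zero _ (sub_ne_zero.mpr hza))]
  obtain ⟨r, hr, hrD⟩ := Metric.isOpen_iff.mp hO a ha
  have hsD : closedBall a (r / 2) ⊆ D := (closedBall_subset_ball (half_lt_self hr)).trans hrD
  have hbound (j : ℕ) : j * ‖g a‖ ≤ diam D / (r / 2) ^ n := by
    have := norm_le_of_tendsto_div_pow (F := fun z => h^[j] z - z) (half_pos hr)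
      (((hd.iterate hm j).fun_sub differentiableOn_id).mono hsD)
      (fun z hz => have hzD := hsD (sphere_subset_closedBall hz)
        (dist_eq_norm _ _).symm.trans_le <| dist_le_diam_of_mem hB (hm.iterate j hzD) hzD)
      (tendsto_iterate_sub_div_pow h2n hha.continuousAt hfix hlim j)
    simpa using this
  obtain ⟨j, hj⟩ := exists_nat_gt (diam D / (r / 2) ^ n / ‖g a‖)
  rw [div_lt_iff₀ (norm_pos_iff.mpr hga)] at hj
  exact (hbound j).not_gt hj

theorem deriv_mul_deriv_eq_one_of_leftInvOn {𝕜 : Type*} [NontriviallyNormedField 𝕜]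
    {D : Set 𝕜} {a : 𝕜} (hD : D ∈ 𝓝 a) {f g : 𝕜 → 𝕜} (hf : DifferentiableAt 𝕜 f a)
    (hg : DifferentiableAt 𝕜 g (f a)) (hgf : LeftInvOn g f D) :
    deriv g (f a) * deriv f a = 1 := by
  have hid : g ∘ f =ᶠ[𝓝 a] id := Filter.mem_of_superset hD fun z hz => hgf hz
  rw [← deriv_comp a hg hf, hid.deriv_eq, deriv_id]

theorem IsAut.exists_inv_fixing {D : Set ℂ} (hO : IsOpen D) {a : ℂ} (ha : a ∈ D) {f : ℂ → ℂ}
    (hf : IsAut D f) (hfa : f a = a) :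
    ∃ g : ℂ → ℂ, DifferentiableOn ℂ g D ∧ MapsTo g D D ∧ g a = a ∧ RightInvOn g f D ∧
      deriv g a * deriv f a = 1 := by
  obtain ⟨hfd, -, -, g, hgd, hgm, hgf, hfg⟩ := hf
  have hga : g a = a := by simpa [hfa] using hgf a ha
  refine ⟨g, hgd, hgm, hga, hfg, ?_⟩
  simpa [hfa] using deriv_mul_deriv_eq_one_of_leftInvOn (hO.mem_nhds ha)
    (hfd.differentiableAt (hO.mem_nhds ha))
    (by rw [hfa]; exact hgd.differentiableAt (hO.mem_nhds ha)) hgf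

/-- For a bounded planar domain `D` and `a ∈ D`, the map `f ↦ f'(a)` from the
isotropy group of automorphisms fixing `a` into the circle group is an
injective group homomorphism: it takes values of modulus one, it is
multiplicative with respect to composition, and it is injective. -/
theorem isotropy_deriv_injective_hom (D : Set ℂ) (hO : IsOpen D)
    (hC : IsConnected D) (hB : Bornology.IsBounded D) (a : ℂ) (ha : a ∈ D) :
    (∀ f : ℂ → ℂ, IsAut D f → f a = a → ‖deriv f a‖ = 1) ∧
    (∀ f g : ℂ → ℂ, IsAut D f → IsAut D g → f a = a → g a = a →
      deriv (f ∘ g) a = deriv f a * deriv g a) ∧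
    (∀ f g : ℂ → ℂ, IsAut D f → IsAut D g → f a = a → g a = a →
      deriv f a = deriv g a → Set.EqOn f g D) := by
  have hdiff {f : ℂ → ℂ} (hf : DifferentiableOn ℂ f D) : DifferentiableAt ℂ f a :=
    hf.differentiableAt (hO.mem_nhds ha)
  refine ⟨fun f hf hfa => ?_, fun f g hf hg _ hga => ?_, fun f g hf hg hfa hga hder => ?_⟩
  · obtain ⟨g, hgd, hgm, hga, -, hderiv_inv⟩ := hf.exists_inv_fixing hO ha hfa
    have hf1 := norm_deriv_le_one_of_mapsTo hO hB ha hf.1 hf.2.1 hfa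
    have hg1 := norm_deriv_le_one_of_mapsTo hO hB ha hgd hgm hga
    have hprod : ‖deriv g a‖ * ‖deriv f a‖ = 1 := by rw [← norm_mul, hderiv_inv, norm_one]
    nlinarith [norm_nonneg (deriv f a), norm_nonneg (deriv g a)]
  · rw [deriv_comp a (by rw [hga]; exact hdiff hf.1) (hdiff hg.1), hga]
  · obtain ⟨g', hg'd, hg'm, hg'a, hgg', hderiv_inv⟩ := hg.exists_inv_fixing hO ha hga
    have hid : EqOn (g' ∘ f) id D := by
      refine eqOn_id_of_deriv_eq_one hO hC.isPreconnected hB ha (hg'd.comp hf.1 hf.2.1)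
        (hg'm.comp hf.2.1) (by simp [hfa, hg'a]) ?_
      rw [deriv_comp a (by rw [hfa]; exact hdiff hg'd) (hdiff hf.1), hfa, hder, hderiv_inv]
    intro z hz
    calc f z = g (g' (f z)) := (hgg' (hf.2.1 hz)).symm
      _ = g z := congrArg g (hid hz)
end
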